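/- arXiv:2202.11223 — 2 statements merged into one kernel-verified Lean document; each statement's English description precedes it below -/
import Mathlib

section
/- Let g > 0, κ > 0, and define Ψ(x,t) = (1/(2√(πκt))) · exp( − ( (√2/g)·arcsinh(g x/√(2κ)) )² / (4t) ) for t > 0 and x ∈ ℝ. Then Ψ satisfies the partial differential equation ∂_t Ψ = κ ∂_x² Ψ + (g²/2)(x²∂_x² + x∂_x)Ψ on ℝ × (0,∞). -/
/-!
With `D x = κ + g²x²/2` the spatial operator is `D ∂ₓ² + (D'/2) ∂ₓ = (√D ∂ₓ)²`, and
`z x = (√2/g) arsinh (g x/√(2κ))` satisfies `z' = 1/√D`, so `√D ∂ₓ = ∂_z`. Hence `Ψ(x,t) = K(z x, t)`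
where `K(z,t) = (4πκt)^(-1/2) exp(-z²/(4t))` solves the unit-diffusivity heat equation `∂ₜK = ∂_z² K`.
-/

open Real

noncomputable def heatKernel (p t w : ℝ) : ℝ :=
  1 / (2 * √(p * t)) * exp (-w ^ 2 / (4 * t))

lemma hasDerivAt_heatKernel_space (p t w : ℝ) :
    HasDerivAt (heatKernel p t) (heatKernel p t w * (-w / (2 * t))) w := by
  have hq : HasDerivAt (fun w : ℝ => -w ^ 2 / (4 * t)) (-(2 * w) / (4 * t)) w := by
    simpa using ((hasDerivAt_pow 2 w).neg.div_const (4 * t))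
  refine (hq.exp.const_mul (1 / (2 * √(p * t)))).congr_deriv ?_
  rw [heatKernel]
  ring

lemma hasDerivAt_heatKernel_space_deriv (p t w : ℝ) :
    HasDerivAt (fun w => heatKernel p t w * (-w / (2 * t)))
      (heatKernel p t w * (w ^ 2 / (4 * t ^ 2) - 1 / (2 * t))) w := by
  have hl : HasDerivAt (fun w : ℝ => -w / (2 * t)) (-1 / (2 * t)) w :=
    (hasDerivAt_id w).neg.div_const (2 * t)
  refine ((hasDerivAt_heatKernel_space p t w).mul hl).congr_deriv ?_
  ring

lemma hasDerivAt_heatKernel_time {p t : ℝ} (hp : 0 < p) (ht : 0 < t) (w : ℝ) :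
    HasDerivAt (fun τ => heatKernel p τ w)
      (heatKernel p t w * (w ^ 2 / (4 * t ^ 2) - 1 / (2 * t))) t := by
  have hpt : 0 < p * t := mul_pos hp ht
  have hs : √(p * t) ^ 2 = p * t := sq_sqrt hpt.le
  have hpre := (hasDerivAt_const t (1 : ℝ)).fun_div
    ((((hasDerivAt_id t).const_mul p).sqrt (by simpa using hpt.ne')).const_mul 2) (by positivity)
  have hexp := (hasDerivAt_const t (-w ^ 2)).fun_div ((hasDerivAt_id t).const_mul 4)
    (by simpa using ht.ne')
  refine (hpre.mul hexp.exp).congr_deriv ?_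
  simp only [heatKernel, id]
  field_simp
  linear_combination (4 * t) * hs

theorem mul_deriv_deriv_comp_add_of_hasDerivAt_inv_sqrt {z D G G' : ℝ → ℝ} {D' G'' x : ℝ}
    (hz : ∀ y, HasDerivAt z (√(D y))⁻¹ y) (hDx : 0 < D x) (hD : HasDerivAt D D' x)
    (hG : ∀ w, HasDerivAt G (G' w) w) (hG' : HasDerivAt G' G'' (z x)) :
    D x * deriv (deriv fun y => G (z y)) x + D' / 2 * deriv (fun y => G (z y)) x = G'' := by
  have hd1 : deriv (fun y => G (z y)) = fun y => G' (z y) * (√(D y))⁻¹ :=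
    funext fun y => ((hG (z y)).comp y (hz y)).deriv
  have hsx : 0 < √(D x) := sqrt_pos.mpr hDx
  have hd2 : deriv (fun y => G' (z y) * (√(D y))⁻¹) x =
      G'' * (√(D x))⁻¹ * (√(D x))⁻¹ + G' (z x) * (-(D' / (2 * √(D x))) / √(D x) ^ 2) :=
    ((hG'.comp x (hz x)).mul ((hD.sqrt hDx.ne').fun_inv hsx.ne')).deriv
  rw [hd1, hd2]
  set s := √(D x)
  rw [← sq_sqrt hDx.le]
  field_simp
  ring

theorem hasDerivAt_arsinh_rescaled {g κ : ℝ} (hg : g ≠ 0) (hκ : 0 < κ) (y : ℝ) :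
    HasDerivAt (fun y => √2 / g * arsinh (g * y / √(2 * κ))) (√(κ + g ^ 2 / 2 * y ^ 2))⁻¹ y := by
  have hr : 0 < √(2 * κ) := sqrt_pos.mpr (by positivity)
  have key : √(1 + (g * y / √(2 * κ)) ^ 2) = √2 * √(κ + g ^ 2 / 2 * y ^ 2) / √(2 * κ) := by
    rw [eq_div_iff hr.ne', ← sqrt_mul (by positivity), ← sqrt_mul (by norm_num), div_pow,
      sq_sqrt (by positivity)]
    congr 1
    field_simp
  have h := (((hasDerivAt_id y).const_mul g).div_const (√(2 * κ))).arsinh.const_mul (√2 / g)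
  refine h.congr_deriv ?_
  have hu : 0 < √(κ + g ^ 2 / 2 * y ^ 2) := sqrt_pos.mpr (by positivity)
  simp only [id, mul_one, smul_eq_mul, key]
  field_simp

/-- The function `Ψ(x,t) = (1/(2√(πκt))) exp(−((√2/g) arsinh(gx/√(2κ)))²/(4t))` solves
`∂_t Ψ = κ ∂_x² Ψ + (g²/2)(x² ∂_x² + x ∂_x) Ψ` on `ℝ × (0,∞)`. -/
theorem stmt_6 (g κ : ℝ) (hg : 0 < g) (hκ : 0 < κ)
    (Ψ : ℝ → ℝ → ℝ)
    (hΨ : ∀ x t, Ψ x t =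
      1 / (2 * Real.sqrt (Real.pi * κ * t)) *
        Real.exp (-(Real.sqrt 2 / g * Real.arsinh (g * x / Real.sqrt (2 * κ))) ^ 2 / (4 * t))) :
    ∀ (x t : ℝ), 0 < t →
      deriv (fun τ => Ψ x τ) t =
        κ * deriv (deriv (fun y => Ψ y t)) x +
          (g ^ 2 / 2) *
            (x ^ 2 * deriv (deriv (fun y => Ψ y t)) x + x * deriv (fun y => Ψ y t) x) := by
  intro x t ht
  obtain rfl : Ψ = fun x t => heatKernel (π * κ) t (√2 / g * arsinh (g * x / √(2 * κ))) :=
    funext fun x => funext (hΨ x)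
  have hD : HasDerivAt (fun y => κ + g ^ 2 / 2 * y ^ 2) (g ^ 2 * x) x := by
    refine (((hasDerivAt_pow 2 x).const_mul (g ^ 2 / 2)).const_add κ).congr_deriv ?_
    ring
  have hgen := mul_deriv_deriv_comp_add_of_hasDerivAt_inv_sqrt
    (hasDerivAt_arsinh_rescaled hg.ne' hκ) (by positivity) hD
    (hasDerivAt_heatKernel_space (π * κ) t) (hasDerivAt_heatKernel_space_deriv (π * κ) t _)
  rw [(hasDerivAt_heatKernel_time (by positivity) ht _).deriv]
  linear_combination -hgen
end

section
/- As t → ∞, the integral I(t) = ∫₀^∞ k e^{−k²t/2} coth(πk/2) dk satisfies I(t) = √(2/(πt)) + O(t^{−3/2}); more precisely, t^{1/2}·I(t) → √(2/π) as t → ∞, and t^{3/2}·(I(t) − √(2/(πt))) → π^{3/2}/(6√2). -/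
/-!
With `x = πk/2` one has `k coth(πk/2) = (2/π) · x coth x`, and for `x > 0`
`1 + x²/3 - x⁴/45 ≤ x coth x ≤ 1 + x²/3`. Hence the integrand of `I(t)` lies between
`e^{-tk²/2}` times two even polynomials of degree at most four, whose integrals are Gaussian
moments. This gives `√(2/(πt)) + L t^{-3/2} - O(t^{-5/2}) ≤ I(t) ≤ √(2/(πt)) + L t^{-3/2}` with
`L = π^{3/2}/(6√2)`, and both limits follow by squeezing.
-/

open Filter Real Set MeasureTheory
open scoped Nat

lemma nonneg_of_hasDerivAt_of_nonneg {f f' : ℝ → ℝ} (hf : ∀ x, HasDerivAt f (f' x) x)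
    (hf' : ∀ x, 0 < x → 0 ≤ f' x) (h0 : f 0 = 0) {x : ℝ} (hx : 0 ≤ x) : 0 ≤ f x := by
  have hmono : MonotoneOn f (Ici 0) :=
    monotoneOn_of_hasDerivWithinAt_nonneg (convex_Ici 0)
      (fun y _ => (hf y).continuousAt.continuousWithinAt)
      (fun y _ => (hf y).hasDerivWithinAt) (fun y hy => hf' y (by simpa using hy))
  simpa [h0] using hmono self_mem_Ici hx hx

namespace Real

/- Each inequality below is `0 ≤ F x` with `F 0 = 0`; its coefficients are chosen so that `F'`
is `x` times a function known to be nonnegative. -/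

lemma sinh_le_mul_cosh {x : ℝ} (hx : 0 ≤ x) : sinh x ≤ x * cosh x := by
  have := nonneg_of_hasDerivAt_of_nonneg (f := fun x => x * cosh x - sinh x)
    (fun y => (((hasDerivAt_id' y).mul (hasDerivAt_cosh y)).sub (hasDerivAt_sinh y)).congr_deriv
      (by ring))
    (fun y hy => mul_nonneg hy.le (sinh_nonneg_iff.2 hy.le)) (by simp) hx
  linarith

lemma three_mul_mul_cosh_le {x : ℝ} (hx : 0 ≤ x) :
    3 * x * cosh x ≤ (3 + x ^ 2) * sinh x := by
  have := nonneg_of_hasDerivAt_of_nonneg (f := fun x => (3 + x ^ 2) * sinh x - 3 * x * cosh x)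
    (f' := fun y => y * (y * cosh y - sinh y))
    (fun y => ((((hasDerivAt_pow 2 y).const_add 3).mul (hasDerivAt_sinh y)).sub
        (((hasDerivAt_id' y).const_mul 3).mul (hasDerivAt_cosh y))).congr_deriv
      (by push_cast; ring))
    (fun y hy => mul_nonneg hy.le (sub_nonneg.2 (sinh_le_mul_cosh hy.le))) (by simp) hx
  linarith

private lemma seven_mul_mul_cosh_add_nonneg {x : ℝ} (hx : 0 ≤ x) :
    0 ≤ 7 * x * cosh x + (x ^ 2 - 7) * sinh x :=
  nonneg_of_hasDerivAt_of_nonneg (f' := fun y => y ^ 2 * cosh y + 9 * y * sinh y)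
    (fun y => ((((hasDerivAt_id' y).const_mul 7).mul (hasDerivAt_cosh y)).add
        (((hasDerivAt_pow 2 y).sub_const 7).mul (hasDerivAt_sinh y))).congr_deriv
      (by push_cast; ring))
    (fun y hy => by have := sinh_nonneg_iff.2 hy.le; positivity) (by simp) hx

private lemma cubic_mul_cosh_add_nonneg {x : ℝ} (hx : 0 ≤ x) :
    0 ≤ (x ^ 3 - 15 * x) * cosh x + (15 + 4 * x ^ 2) * sinh x :=
  nonneg_of_hasDerivAt_of_nonneg
    (f' := fun y => y * (7 * y * cosh y + (y ^ 2 - 7) * sinh y))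
    (fun y => ((((hasDerivAt_pow 3 y).sub ((hasDerivAt_id' y).const_mul 15)).mul
        (hasDerivAt_cosh y)).add
        ((((hasDerivAt_pow 2 y).const_mul 4).const_add 15).mul (hasDerivAt_sinh y))).congr_deriv
      (by simp only [Pi.sub_apply]; push_cast; ring))
    (fun y hy => mul_nonneg hy.le (seven_mul_mul_cosh_add_nonneg hy.le)) (by simp) hx

lemma quartic_mul_sinh_le {x : ℝ} (hx : 0 ≤ x) :
    (45 + 15 * x ^ 2 - x ^ 4) * sinh x ≤ 45 * x * cosh x := by
  have := nonneg_of_hasDerivAt_of_nonneg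
    (f := fun x => 45 * x * cosh x - (45 + 15 * x ^ 2 - x ^ 4) * sinh x)
    (f' := fun y => y * ((y ^ 3 - 15 * y) * cosh y + (15 + 4 * y ^ 2) * sinh y))
    (fun y => ((((hasDerivAt_id' y).const_mul 45).mul (hasDerivAt_cosh y)).sub
        (((((hasDerivAt_pow 2 y).const_mul 15).const_add 45).sub (hasDerivAt_pow 4 y)).mul
          (hasDerivAt_sinh y))).congr_deriv
      (by simp only [Pi.sub_apply]; push_cast; ring))
    (fun y hy => mul_nonneg hy.le (cubic_mul_cosh_add_nonneg hy.le)) (by simp) hx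
  linarith

lemma mul_cosh_div_sinh_le {x : ℝ} (hx : 0 < x) : x * (cosh x / sinh x) ≤ 1 + x ^ 2 / 3 := by
  rw [← mul_div_assoc, div_le_iff₀ (sinh_pos_iff.2 hx)]
  linarith [three_mul_mul_cosh_le hx.le]

lemma le_mul_cosh_div_sinh {x : ℝ} (hx : 0 < x) :
    1 + x ^ 2 / 3 - x ^ 4 / 45 ≤ x * (cosh x / sinh x) := by
  rw [← mul_div_assoc, le_div_iff₀ (sinh_pos_iff.2 hx)]
  linarith [quartic_mul_sinh_le hx.le]

end Real

lemma integrableOn_pow_mul_exp_neg_mul_sq {b : ℝ} (hb : 0 < b) (n : ℕ) :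
    IntegrableOn (fun x : ℝ => x ^ n * exp (-b * x ^ 2)) (Ioi 0) := by
  simpa using
    integrableOn_rpow_mul_exp_neg_mul_sq hb (s := n) (by linarith [n.cast_nonneg (α := ℝ)])

lemma integral_pow_two_mul_mul_exp_neg_mul_sq {b : ℝ} (hb : 0 < b) (n : ℕ) :
    ∫ x in Ioi (0 : ℝ), x ^ (2 * n) * exp (-b * x ^ 2) =
      (2 * n - 1 : ℕ)‼ / (2 * b) ^ n * (√(π / b) / 2) := by
  have h := integral_rpow_mul_exp_neg_mul_rpow (p := 2) (q := 2 * n) two_pos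
    (by linarith [n.cast_nonneg (α := ℝ)]) hb
  have hpow : b ^ (-(2 * n + 1 : ℝ) / 2) = (b ^ n)⁻¹ / √b := by
    rw [show -(2 * n + 1 : ℝ) / 2 = -(n : ℝ) + -(1 / 2) by ring, rpow_add hb, rpow_neg hb.le,
      rpow_neg hb.le, rpow_natCast, ← sqrt_eq_rpow, div_eq_mul_inv]
  have hGamma : Gamma ((2 * n + 1 : ℝ) / 2) = (2 * n - 1 : ℕ)‼ * √π / 2 ^ n := by
    rw [← Gamma_nat_add_half]; ring_nf
  simp only [← rpow_natCast, Nat.cast_mul, Nat.cast_ofNat] at h ⊢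
  rw [h, hpow, hGamma, sqrt_div' _ hb.le, rpow_natCast, mul_pow]
  field_simp

private lemma exp_neg_mul_sq_mul_quartic_eq (b c₀ c₂ c₄ : ℝ) :
    (fun x : ℝ => exp (-b * x ^ 2) * (c₀ + c₂ * x ^ 2 - c₄ * x ^ 4)) =
      fun x => c₀ * (x ^ (2 * 0) * exp (-b * x ^ 2)) + c₂ * (x ^ (2 * 1) * exp (-b * x ^ 2)) -
        c₄ * (x ^ (2 * 2) * exp (-b * x ^ 2)) := by
  ext x; ring

lemma integrableOn_const_mul_pow_two_mul_mul_exp_neg_mul_sq {b : ℝ} (hb : 0 < b) (c : ℝ)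
    (n : ℕ) :
    IntegrableOn (fun x : ℝ => c * (x ^ (2 * n) * exp (-b * x ^ 2))) (Ioi 0) :=
  (integrableOn_pow_mul_exp_neg_mul_sq hb _).const_mul c

lemma integrableOn_exp_neg_mul_sq_mul_quartic {b : ℝ} (hb : 0 < b) (c₀ c₂ c₄ : ℝ) :
    IntegrableOn (fun x : ℝ => exp (-b * x ^ 2) * (c₀ + c₂ * x ^ 2 - c₄ * x ^ 4)) (Ioi 0) := by
  have h := integrableOn_const_mul_pow_two_mul_mul_exp_neg_mul_sq hb
  rw [exp_neg_mul_sq_mul_quartic_eq]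
  exact ((h c₀ 0).add (h c₂ 1)).sub (h c₄ 2)

lemma integral_exp_neg_mul_sq_mul_quartic {b : ℝ} (hb : 0 < b) (c₀ c₂ c₄ : ℝ) :
    ∫ x in Ioi (0 : ℝ), exp (-b * x ^ 2) * (c₀ + c₂ * x ^ 2 - c₄ * x ^ 4) =
      √(π / b) / 2 * (c₀ + c₂ / (2 * b) - 3 * c₄ / (4 * b ^ 2)) := by
  have h := integrableOn_const_mul_pow_two_mul_mul_exp_neg_mul_sq hb
  rw [exp_neg_mul_sq_mul_quartic_eq, integral_sub _ (h c₄ 2), integral_add (h c₀ 0) (h c₂ 1)]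
  · simp only [integral_const_mul, integral_pow_two_mul_mul_exp_neg_mul_sq hb]
    norm_num
    field_simp
    ring
  · exact (h c₀ 0).add (h c₂ 1)

lemma integral_exp_neg_mul_sq_mul_bounds {b c₀ c₂ c₄ : ℝ} (hb : 0 < b) {f : ℝ → ℝ}
    (hf : AEStronglyMeasurable f (volume.restrict (Ioi 0)))
    (hlo : ∀ x > 0, c₀ + c₂ * x ^ 2 - c₄ * x ^ 4 ≤ f x) (hhi : ∀ x > 0, f x ≤ c₀ + c₂ * x ^ 2) :
    √(π / b) / 2 * (c₀ + c₂ / (2 * b) - 3 * c₄ / (4 * b ^ 2)) ≤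
        ∫ x in Ioi 0, exp (-b * x ^ 2) * f x ∧
      ∫ x in Ioi 0, exp (-b * x ^ 2) * f x ≤ √(π / b) / 2 * (c₀ + c₂ / (2 * b)) := by
  have hlo' : ∀ x ∈ Ioi (0 : ℝ),
      exp (-b * x ^ 2) * (c₀ + c₂ * x ^ 2 - c₄ * x ^ 4) ≤ exp (-b * x ^ 2) * f x :=
    fun x hx => mul_le_mul_of_nonneg_left (hlo x hx) (exp_pos _).le
  have hhi' : ∀ x ∈ Ioi (0 : ℝ),
      exp (-b * x ^ 2) * f x ≤ exp (-b * x ^ 2) * (c₀ + c₂ * x ^ 2 - 0 * x ^ 4) :=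
    fun x hx => mul_le_mul_of_nonneg_left (by simpa using hhi x hx) (exp_pos _).le
  have hint : IntegrableOn (fun x => exp (-b * x ^ 2) * f x) (Ioi 0) :=
    integrable_of_le_of_le (by fun_prop)
      ((ae_restrict_iff' measurableSet_Ioi).2 (ae_of_all _ hlo'))
      ((ae_restrict_iff' measurableSet_Ioi).2 (ae_of_all _ hhi'))
      (integrableOn_exp_neg_mul_sq_mul_quartic hb c₀ c₂ c₄)
      (integrableOn_exp_neg_mul_sq_mul_quartic hb c₀ c₂ 0)
  constructor
  · rw [← integral_exp_neg_mul_sq_mul_quartic hb]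
    exact setIntegral_mono_on (integrableOn_exp_neg_mul_sq_mul_quartic hb c₀ c₂ c₄) hint
      measurableSet_Ioi hlo'
  · have := integral_exp_neg_mul_sq_mul_quartic hb c₀ c₂ 0
    rw [mul_zero, zero_div, sub_zero] at this
    rw [← this]
    exact setIntegral_mono_on hint (integrableOn_exp_neg_mul_sq_mul_quartic hb c₀ c₂ 0)
      measurableSet_Ioi hhi'

lemma rpow_three_div_two_eq_mul_sqrt {x : ℝ} (hx : 0 ≤ x) : x ^ (3 / 2 : ℝ) = x * √x := by
  rw [show (3 / 2 : ℝ) = 1 + 1 / 2 by norm_num, rpow_add' hx (by norm_num), rpow_one,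
    ← sqrt_eq_rpow]

lemma mul_cosh_div_sinh_pi_mul_div_two_le {k : ℝ} (hk : 0 < k) :
    k * (cosh (π * k / 2) / sinh (π * k / 2)) ≤ 2 / π + π / 6 * k ^ 2 :=
  calc k * (cosh (π * k / 2) / sinh (π * k / 2))
      = 2 / π * (π * k / 2 * (cosh (π * k / 2) / sinh (π * k / 2))) := by field_simp
    _ ≤ 2 / π * (1 + (π * k / 2) ^ 2 / 3) := by
      gcongr; exact mul_cosh_div_sinh_le (by positivity)
    _ = 2 / π + π / 6 * k ^ 2 := by field_simp; ring

lemma le_mul_cosh_div_sinh_pi_mul_div_two {k : ℝ} (hk : 0 < k) :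
    2 / π + π / 6 * k ^ 2 - π ^ 3 / 360 * k ^ 4 ≤ k * (cosh (π * k / 2) / sinh (π * k / 2)) :=
  calc 2 / π + π / 6 * k ^ 2 - π ^ 3 / 360 * k ^ 4
      = 2 / π * (1 + (π * k / 2) ^ 2 / 3 - (π * k / 2) ^ 4 / 45) := by field_simp; ring
    _ ≤ 2 / π * (π * k / 2 * (cosh (π * k / 2) / sinh (π * k / 2))) := by
      gcongr; exact le_mul_cosh_div_sinh (by positivity)
    _ = k * (cosh (π * k / 2) / sinh (π * k / 2)) := by field_simp

noncomputable def cothGaussianIntegral (t : ℝ) : ℝ :=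
  ∫ k in Ioi 0, k * exp (-k ^ 2 * t / 2) * (cosh (π * k / 2) / sinh (π * k / 2))

lemma cothGaussianIntegral_remainder_bounds {t : ℝ} (ht : 0 < t) :
    √(2 * π) / 2 * (π / 6 - π ^ 3 / 120 / t) ≤
        t ^ (3 / 2 : ℝ) * (cothGaussianIntegral t - √(2 / (π * t))) ∧
      t ^ (3 / 2 : ℝ) * (cothGaussianIntegral t - √(2 / (π * t))) ≤ √(2 * π) / 2 * (π / 6) := by
  obtain ⟨hlo, hhi⟩ := integral_exp_neg_mul_sq_mul_bounds (half_pos ht)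
    (f := fun k => k * (cosh (π * k / 2) / sinh (π * k / 2))) (by fun_prop)
    (fun k hk => le_mul_cosh_div_sinh_pi_mul_div_two hk)
    (fun k hk => mul_cosh_div_sinh_pi_mul_div_two_le hk)
  have hJ : ∫ k in Ioi 0, exp (-(t / 2) * k ^ 2) * (k * (cosh (π * k / 2) / sinh (π * k / 2))) =
      cothGaussianIntegral t :=
    integral_congr_ae (ae_of_all _ fun k => by ring_nf)
  rw [hJ] at hlo hhi
  set u := √(π / (t / 2)) / 2
  have hu : u * (2 / π) = √(2 / (π * t)) := by
    rw [show 2 / (π * t) = π / (t / 2) / π ^ 2 by field_simp, sqrt_div' _ (by positivity),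
      sqrt_sq pi_pos.le]
    ring
  have hscale : ∀ X,
      t ^ (3 / 2 : ℝ) * (u * X - u * (2 / π)) = √(2 * π) / 2 * (t * (X - 2 / π)) := by
    intro X
    simp only [u]
    rw [rpow_three_div_two_eq_mul_sqrt ht.le, show π / (t / 2) = 2 * π / t by ring,
      sqrt_div' _ ht.le]
    field_simp
  have h32 : 0 ≤ t ^ (3 / 2 : ℝ) := rpow_nonneg ht.le _
  have hlo' := mul_le_mul_of_nonneg_left (sub_le_sub_right hlo (u * (2 / π))) h32
  have hhi' := mul_le_mul_of_nonneg_left (sub_le_sub_right hhi (u * (2 / π))) h32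
  rw [hscale] at hlo' hhi'
  rw [← hu]
  refine ⟨le_of_eq_of_le ?_ hlo', hhi'.trans_eq ?_⟩ <;> field_simp <;> ring

/-- Laplace-method asymptotics of `I(t) = ∫₀^∞ k e^{−k²t/2} coth(πk/2) dk` as `t → ∞`:
`t^{1/2} I(t) → √(2/π)` and `t^{3/2}(I(t) − √(2/(πt))) → π^{3/2}/(6√2)`. -/
theorem stmt_10
    (I : ℝ → ℝ)
    (hI : ∀ t, I t = ∫ k in Set.Ioi (0 : ℝ),
      k * Real.exp (-k ^ 2 * t / 2) *
        (Real.cosh (Real.pi * k / 2) / Real.sinh (Real.pi * k / 2))) :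
    Tendsto (fun t => t ^ (1 / 2 : ℝ) * I t) atTop (nhds (Real.sqrt (2 / Real.pi))) ∧
    Tendsto (fun t => t ^ (3 / 2 : ℝ) * (I t - Real.sqrt (2 / (Real.pi * t)))) atTop
      (nhds (Real.pi ^ (3 / 2 : ℝ) / (6 * Real.sqrt 2))) := by
  obtain rfl : I = cothGaussianIntegral := funext hI
  set R := fun t => t ^ (3 / 2 : ℝ) * (cothGaussianIntegral t - √(2 / (π * t)))
  have hL : √(2 * π) / 2 * (π / 6) = π ^ (3 / 2 : ℝ) / (6 * √2) := by
    rw [rpow_three_div_two_eq_mul_sqrt pi_pos.le, sqrt_mul zero_le_two]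
    field_simp
    rw [sq_sqrt zero_le_two]
  have hR : Tendsto R atTop (nhds (π ^ (3 / 2 : ℝ) / (6 * √2))) := by
    rw [← hL]
    have hlo := ((tendsto_const_nhds (x := π ^ 3 / 120)).div_atTop tendsto_id).const_sub (π / 6)
      |>.const_mul (√(2 * π) / 2)
    rw [sub_zero] at hlo
    refine tendsto_of_tendsto_of_tendsto_of_le_of_le' hlo tendsto_const_nhds ?_ ?_ <;>
      filter_upwards [eventually_gt_atTop 0] with t ht
    exacts [(cothGaussianIntegral_remainder_bounds ht).1,
      (cothGaussianIntegral_remainder_bounds ht).2]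
  refine ⟨?_, hR⟩
  have hsqrt : ∀ t > 0, t ^ (1 / 2 : ℝ) * cothGaussianIntegral t = √(2 / π) + t⁻¹ * R t := by
    intro t ht
    simp only [R]
    rw [rpow_three_div_two_eq_mul_sqrt ht.le, show 2 / (π * t) = 2 / π / t by ring,
      sqrt_div' _ ht.le, ← sqrt_eq_rpow]
    field_simp
    ring
  have := (tendsto_inv_atTop_zero.mul hR).const_add √(2 / π)
  rw [zero_mul, add_zero] at this
  exact this.congr' (eventually_gt_atTop 0 |>.mono fun t ht => (hsqrt t ht).symm)
end
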